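/- Let G' and α be the graph and coloring constructed from a graph G on n vertices and an integer t ≥ 1, and let k = n + t + 1. Let α_0, …, α_ℓ be a k-recoloring sequence with α_0 = α and ℓ ≤ 2t + 2t². Then for every vertex g_i ∈ V_G and every 0 ≤ x ≤ ℓ, α_x(g_i) ∈ {i, n + t + 1}; moreover, for every vertex b ∈ V_B and every 0 ≤ x ≤ ℓ, α_x(b) ≠ n + t + 1. -/

import Mathlib

/-- A `k`-coloring of `G`: colors in `{1,…,k}`, adjacent vertices differently colored. -/
def IsKColoring {V : Type*} (G : SimpleGraph V) (k : ℕ) (γ : V → ℕ) : Prop :=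
  (∀ v, γ v ∈ Finset.Icc 1 k) ∧ ∀ u v, G.Adj u v → γ u ≠ γ v

/-- A `k`-recoloring sequence `seq 0, …, seq ℓ` from `α` to `β`:
all are `k`-colorings, and consecutive colorings differ on at most one vertex. -/
def IsRecolSeq {V : Type*} (G : SimpleGraph V) (k : ℕ) (seq : ℕ → V → ℕ)
    (ℓ : ℕ) (α β : V → ℕ) : Prop :=
  seq 0 = α ∧ seq ℓ = β ∧ (∀ i ≤ ℓ, IsKColoring G k (seq i)) ∧
  ∀ i < ℓ, ∀ u w, seq i u ≠ seq (i+1) u → seq i w ≠ seq (i+1) w → u = w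

/-- The graph `B_k`: vertices `b^i_j` for `i,j ∈ {1,…,k}`, with `b^i_j ~ b^{i'}_{j'}`
iff `i ≠ i'` and `j ≠ j'` (the complement of `K_k □ K_k`). -/
def Bgraph (k : ℕ) : SimpleGraph (Fin k × Fin k) where
  Adj p q := p.1 ≠ q.1 ∧ p.2 ≠ q.2
  symm := ⟨fun p q h => ⟨h.1.symm, h.2.symm⟩⟩
  loopless := ⟨fun p h => h.1 rfl⟩

/-- The coloring `α^k` of `B_k`: `α^k(b^i_j) = i`. -/
def alphak (k : ℕ) : Fin k × Fin k → ℕ := fun p => p.1.val + 1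

/-- The coloring `β^k` of `B_k`: `β^k(b^i_j) = j`. -/
def betak (k : ℕ) : Fin k × Fin k → ℕ := fun p => p.2.val + 1

/-- Vertices of the graph `G'` of the W[1]-hardness construction:
`g i` are the vertices `g_1,…,g_n` (copies of `v_1,…,v_n`), `b i j` are the vertices of
`V_B = {b^i_j : i,j ∈ {1,…,t}}`, and `c m s` is the `s`-th vertex of the color-guard set
`C_{m+1}` (each of the `n+t+1` sets `C_1,…,C_{n+t+1}` has `2t + 2t²` vertices). -/
inductive GV (n t : ℕ) : Type
  | g : Fin n → GV n t
  | b : Fin t → Fin t → GV n t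
  | c : Fin (n + t + 1) → Fin (2 * t + 2 * t ^ 2) → GV n t
deriving DecidableEq

/-- The graph `G'` of the W[1]-hardness construction, built from `G`. -/
def Wgraph (n t : ℕ) (G : SimpleGraph (Fin n)) : SimpleGraph (GV n t) where
  Adj w w' :=
    match w, w' with
    | .g p, .g q => G.Adj p q
    | .g _, .b _ _ => True
    | .b _ _, .g _ => True
    | .b i j, .b i' j' => i ≠ i' ∧ j ≠ j'
    | .g i, .c m _ => m.val ≠ i.val ∧ m.val ≠ n + t
    | .c m _, .g i => m.val ≠ i.val ∧ m.val ≠ n + t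
    | .b _ _, .c m _ => m.val = n + t
    | .c m _, .b _ _ => m.val = n + t
    | .c _ _, .c _ _ => False
  symm := by
    constructor
    rintro (p | ⟨i, j⟩ | ⟨m, s⟩) (q | ⟨i', j'⟩ | ⟨m', s'⟩) h
    · exact G.symm.symm _ _ h
    · trivial
    · exact h
    · trivial
    · exact ⟨fun e => h.1 e.symm, fun e => h.2 e.symm⟩
    · exact h
    · exact h
    · exact h
    · exact h
  loopless := by
    constructor
    rintro (p | ⟨i, j⟩ | ⟨m, s⟩) h
    · exact G.loopless.irrefl p h
    · exact h.1 rfl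
    · exact h

/-- The `(n+t+1)`-coloring `α` of `G'`: `α(g_i) = i`, `α(c) = i` for `c ∈ C_i`,
`α(b^i_j) = n + i`. -/
def Walpha (n t : ℕ) : GV n t → ℕ
  | .g i => i.val + 1
  | .b i _ => n + i.val + 1
  | .c m _ => m.val + 1

/-- The `(n+t+1)`-coloring `β` of `G'`: agrees with `α` on `V_G ∪ V_C`, and
`β(b^i_j) = n + j`. -/
def Wbeta (n t : ℕ) : GV n t → ℕ
  | .g i => i.val + 1
  | .b _ j => n + j.val + 1
  | .c m _ => m.val + 1

/-!
A recoloring sequence changes at most one vertex per step, so after `x` steps at most `x`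
vertices differ from their initial color. Each guard set `C_m` has `2t + 2t² ≥ ℓ` vertices,
so once a vertex outside the guard sets has been recolored, at most `x - 1 < |C_m|` other
vertices have, and every `C_m` still holds a vertex of its initial color `m`. Such guards pin
the colors available to a recolored vertex: `g_i` sees `C_m` for all
`m ∉ {i, n+t+1}`, and every `b ∈ V_B` sees `C_{n+t+1}`.
-/

open Finset

section RecoloredVertices

def AtMostOneChangePerStep {V α : Type*} (seq : ℕ → V → α) (ℓ : ℕ) : Prop :=
  ∀ i < ℓ, ∀ u w, seq i u ≠ seq (i + 1) u → seq i w ≠ seq (i + 1) w → u = w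

variable {V α : Type*} [DecidableEq V] [DecidableEq α] {seq : ℕ → V → α} {ℓ : ℕ}

theorem card_filter_recolored_le
    (hone : AtMostOneChangePerStep seq ℓ)
    (S : Finset V) {x : ℕ} (hx : x ≤ ℓ) :
    #{w ∈ S | seq x w ≠ seq 0 w} ≤ x := by
  induction x with
  | zero => simp
  | succ x ih =>
    have hstep : #{w ∈ S | seq x w ≠ seq (x + 1) w} ≤ 1 :=
      card_le_one.mpr fun u hu w hw =>
        hone x hx u w (mem_filter.mp hu).2 (mem_filter.mp hw).2
    have hsub : {w ∈ S | seq (x + 1) w ≠ seq 0 w} ⊆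
        {w ∈ S | seq x w ≠ seq 0 w} ∪ {w ∈ S | seq x w ≠ seq (x + 1) w} := by
      intro w hw
      simp only [mem_filter, mem_union] at hw ⊢
      by_cases h : seq x w = seq (x + 1) w
      · exact Or.inl ⟨hw.1, h ▸ hw.2⟩
      · exact Or.inr ⟨hw.1, h⟩
    have := ih (by omega)
    calc _ ≤ _ := card_le_card hsub
      _ ≤ _ := card_union_le _ _
      _ ≤ x + 1 := by omega

theorem exists_unrecolored_of_recolored
    (hone : AtMostOneChangePerStep seq ℓ)
    {x : ℕ} (hx : x ≤ ℓ) {v : V} (hv : seq x v ≠ seq 0 v) {S : Finset V} (hvS : v ∉ S)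
    (hS : x ≤ #S) : ∃ w ∈ S, seq x w = seq 0 w := by
  by_contra! hall
  have hsub : insert v S ⊆ {w ∈ insert v S | seq x w ≠ seq 0 w} := by
    intro w hw
    refine mem_filter.mpr ⟨hw, ?_⟩
    rcases mem_insert.mp hw with rfl | hw
    exacts [hv, hall w hw]
  have := (card_le_card hsub).trans (card_filter_recolored_le hone _ hx)
  rw [card_insert_of_notMem hvS] at this
  omega

end RecoloredVertices

section Guards

variable {n t : ℕ} {G : SimpleGraph (Fin n)} {ℓ : ℕ} {seq : ℕ → GV n t → ℕ} {β : GV n t → ℕ}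

theorem exists_guard_of_recolored (hℓ : ℓ ≤ 2 * t + 2 * t ^ 2)
    (hseq : IsRecolSeq (Wgraph n t G) (n + t + 1) seq ℓ (Walpha n t) β) {x : ℕ} (hx : x ≤ ℓ)
    {v : GV n t} (hv : ∀ m s, v ≠ .c m s) (hrec : seq x v ≠ Walpha n t v)
    (m : Fin (n + t + 1)) : ∃ s, seq x (.c m s) = m.val + 1 := by
  obtain ⟨h0, -, -, hone⟩ := hseq
  rw [← h0] at hrec
  have hinj : Function.Injective (GV.c (n := n) (t := t) m) := fun _ _ h => GV.c.inj h |>.2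
  obtain ⟨w, hw, hguard⟩ := exists_unrecolored_of_recolored hone hx hrec
    (S := univ.image (GV.c m)) (by simpa using fun s => (hv m s).symm)
    (by rw [card_image_of_injective _ hinj, card_univ, Fintype.card_fin]; omega)
  obtain ⟨s, -, rfl⟩ := mem_image.mp hw
  exact ⟨s, by rw [hguard, h0]; rfl⟩

theorem color_g_eq_or_eq_top (hℓ : ℓ ≤ 2 * t + 2 * t ^ 2)
    (hseq : IsRecolSeq (Wgraph n t G) (n + t + 1) seq ℓ (Walpha n t) β) (i : Fin n)
    {x : ℕ} (hx : x ≤ ℓ) : seq x (.g i) = i.val + 1 ∨ seq x (.g i) = n + t + 1 := by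
  by_cases hrec : seq x (.g i) = Walpha n t (.g i)
  · exact Or.inl hrec
  obtain ⟨hrange, hproper⟩ := hseq.2.2.1 x hx
  have hc := mem_Icc.mp (hrange (.g i))
  by_contra! hne
  let m : Fin (n + t + 1) := ⟨seq x (.g i) - 1, by omega⟩
  obtain ⟨s, hs⟩ := exists_guard_of_recolored hℓ hseq hx (fun _ _ => by simp) hrec m
  have hadj : (Wgraph n t G).Adj (.g i) (.c m s) := ⟨by simp [m]; omega, by simp [m]; omega⟩
  have := hproper _ _ hadj
  simp only [hs, m] at this
  omega

theorem color_b_ne_top (hℓ : ℓ ≤ 2 * t + 2 * t ^ 2)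
    (hseq : IsRecolSeq (Wgraph n t G) (n + t + 1) seq ℓ (Walpha n t) β) (i j : Fin t)
    {x : ℕ} (hx : x ≤ ℓ) : seq x (.b i j) ≠ n + t + 1 := by
  by_cases hrec : seq x (.b i j) = Walpha n t (.b i j)
  · rw [hrec]
    simp only [Walpha]
    omega
  let m : Fin (n + t + 1) := ⟨n + t, by omega⟩
  obtain ⟨s, hs⟩ := exists_guard_of_recolored hℓ hseq hx (fun _ _ => by simp) hrec m
  have hadj : (Wgraph n t G).Adj (.b i j) (.c m s) := rfl
  simpa [hs, m] using (hseq.2.2.1 x hx).2 _ _ hadj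

end Guards

theorem stmt_6_general (n t : ℕ) (G : SimpleGraph (Fin n))
    (ℓ : ℕ) (hℓ : ℓ ≤ 2 * t + 2 * t ^ 2) (seq : ℕ → GV n t → ℕ)
    (hseq : IsRecolSeq (Wgraph n t G) (n + t + 1) seq ℓ (Walpha n t) (seq ℓ)) :
    (∀ (i : Fin n) (x : ℕ), x ≤ ℓ →
        seq x (.g i) = i.val + 1 ∨ seq x (.g i) = n + t + 1) ∧
    (∀ (i j : Fin t) (x : ℕ), x ≤ ℓ → seq x (.b i j) ≠ n + t + 1) :=
  ⟨fun i _ hx => color_g_eq_or_eq_top hℓ hseq i hx,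
    fun i j _ hx => color_b_ne_top hℓ hseq i j hx⟩

/-- For `k = n + t + 1` and any `k`-recoloring sequence `α_0,…,α_ℓ` of `G'`
with `α_0 = α` and `ℓ ≤ 2t + 2t²`: every `g_i` only ever gets a color in `{i, n+t+1}`,
and no vertex of `V_B` ever gets the color `n+t+1`. -/
theorem stmt_6 (n t : ℕ) (ht : 1 ≤ t) (G : SimpleGraph (Fin n))
    (ℓ : ℕ) (hℓ : ℓ ≤ 2 * t + 2 * t ^ 2) (seq : ℕ → GV n t → ℕ)
    (hseq : IsRecolSeq (Wgraph n t G) (n + t + 1) seq ℓ (Walpha n t) (seq ℓ)) :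
    (∀ (i : Fin n) (x : ℕ), x ≤ ℓ →
        seq x (.g i) = i.val + 1 ∨ seq x (.g i) = n + t + 1) ∧
    (∀ (i j : Fin t) (x : ℕ), x ≤ ℓ → seq x (.b i j) ≠ n + t + 1) :=
  stmt_6_general n t G ℓ hℓ seq hseq
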